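/- Let I be an arc of {1,...,n} and let α be a weak endomorphism of the cycle graph C_n whose restriction to I is injective. Then there exists σ in the dihedral group D_{2n} of automorphisms of C_n such that α and σ agree on I. -/

import Mathlib

/-!
Every arc is a run `a, a + 1, …, a + k` of at most `n` consecutive vertices. Along such a
run the steps `α (x + 1) - α x` lie in `{0, 1, -1}`; injectivity rules out `0` and also two
consecutive steps that cancel, so all steps equal a common `ε = ±1`. Hence `α (a + t) = α a + t ε`
on the run, which is a rotation (`ε = 1`) or a reflection (`ε = -1`) restricted to the arc.
-/

/-- `α` is a weak endomorphism of the cycle graph `C_n` on `ZMod n`. -/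
def IsWeakEndCycle (n : ℕ) (α : ZMod n → ZMod n) : Prop :=
  ∀ i : ZMod n, α (i + 1) - α i ∈ ({0, 1, -1} : Set (ZMod n))

/-- The subset of `ZMod n` corresponding to the interval `[i,j] = {i, i+1, …, j}`
of `{1,…,n}`. -/
def natInterval (n i j : ℕ) : Set (ZMod n) := (fun x : ℕ => (x : ZMod n)) '' Set.Icc i j

/-- `I` is an arc of `{1,…,n}`: either an interval `[i,j]` with `1 ≤ i ≤ j ≤ n`,
or a wrap-around union `[j,n] ∪ [1,i]` with `1 ≤ i < j - 1 ≤ n - 1`. -/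
def IsArc (n : ℕ) (I : Set (ZMod n)) : Prop :=
  (∃ i j : ℕ, 1 ≤ i ∧ i ≤ j ∧ j ≤ n ∧ I = natInterval n i j) ∨
    (∃ i j : ℕ, 1 ≤ i ∧ i + 1 < j ∧ j ≤ n ∧ I = natInterval n j n ∪ natInterval n 1 i)

/-- The dihedral group `D_{2n}` of automorphisms of `C_n`, generated by the rotation
`i ↦ i + 1` and the reflection `i ↦ 1 - i` (i.e. `i ↦ n - i + 1` mod `n`). -/
def dihedralCycle (n : ℕ) : Subgroup (Equiv.Perm (ZMod n)) :=
  Subgroup.closure {Equiv.addRight (1 : ZMod n), Equiv.subLeft (1 : ZMod n)}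

section LazyWalk

variable {R : Type*} [CommRing R]

theorem eq_of_ne_zero_of_add_ne_zero {d₁ d₂ : R} (h₁ : d₁ ∈ ({0, 1, -1} : Set R))
    (h₂ : d₂ ∈ ({0, 1, -1} : Set R)) (hd₁ : d₁ ≠ 0) (hd₂ : d₂ ≠ 0) (hsum : d₁ + d₂ ≠ 0) :
    d₂ = d₁ := by
  rcases h₁ with rfl | rfl | rfl <;> rcases h₂ with rfl | rfl | rfl <;> simp_all

theorem exists_eq_add_mul_of_injOn_Iic {f : ℕ → R} {k : ℕ}
    (hf : ∀ t, f (t + 1) - f t ∈ ({0, 1, -1} : Set R)) (hinj : Set.InjOn f (Set.Iic k)) :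
    ∃ ε : R, (ε = 1 ∨ ε = -1) ∧ ∀ t ≤ k, f t = f 0 + t * ε := by
  have hne {s t : ℕ} (hs : s ≤ k) (ht : t ≤ k) (hst : s ≠ t) : f s - f t ≠ 0 :=
    fun h => hst (hinj hs ht (sub_eq_zero.mp h))
  rcases Nat.eq_zero_or_pos k with rfl | hk
  · exact ⟨1, Or.inl rfl, fun t ht => by simp [Nat.le_zero.mp ht]⟩
  have hstep : ∀ t, t + 1 ≤ k → f (t + 1) - f t = f 1 - f 0 := by
    intro t
    induction t with
    | zero => intro _; rfl
    | succ t ih =>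
      intro ht
      rw [← ih (by omega)]
      refine eq_of_ne_zero_of_add_ne_zero (hf t) (hf (t + 1))
        (hne (by omega) (by omega) (by omega)) (hne (by omega) (by omega) (by omega)) ?_
      rw [sub_add_sub_cancel']
      exact hne (by omega) (by omega) (by omega)
  refine ⟨f 1 - f 0, ?_, fun t ht => ?_⟩
  · rcases hf 0 with h | h | h
    · exact absurd h (hne hk (Nat.zero_le k) one_ne_zero)
    · exact Or.inl h
    · exact Or.inr h
  · induction t with
    | zero => simp
    | succ t ih =>
      push_cast
      linear_combination hstep t ht + ih (by omega)

end LazyWalk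

section Dihedral

variable {n : ℕ}

theorem addRight_mem_dihedralCycle (c : ZMod n) : Equiv.addRight c ∈ dihedralCycle n := by
  have hgen : Equiv.addRight (1 : ZMod n) ∈ dihedralCycle n :=
    Subgroup.subset_closure (Set.mem_insert _ _)
  obtain ⟨m, rfl⟩ := ZMod.intCast_surjective c
  induction m using Int.induction_on with
  | zero => simp [(dihedralCycle n).one_mem]
  | succ m ih =>
    convert (dihedralCycle n).mul_mem ih hgen using 1
    ext x; simp; ring
  | pred m ih =>
    convert (dihedralCycle n).mul_mem ih ((dihedralCycle n).inv_mem hgen) using 1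
    ext x; simp; ring

theorem subLeft_mem_dihedralCycle (c : ZMod n) : Equiv.subLeft c ∈ dihedralCycle n := by
  have hgen : Equiv.subLeft (1 : ZMod n) ∈ dihedralCycle n :=
    Subgroup.subset_closure (Set.mem_insert_of_mem _ rfl)
  convert (dihedralCycle n).mul_mem hgen (addRight_mem_dihedralCycle (1 - c)) using 1
  ext x; simp; ring

end Dihedral

section Arc

variable {n : ℕ}

def cycleRun (n : ℕ) (a : ZMod n) (k : ℕ) : Set (ZMod n) := (fun t : ℕ => a + t) '' Set.Iic k

theorem injOn_add_natCast (a : ZMod n) {k : ℕ} (hk : k < n) :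
    Set.InjOn (fun t : ℕ => a + t) (Set.Iic k) := by
  intro s hs t ht h
  have := (ZMod.natCast_eq_natCast_iff' s t n).mp (add_left_cancel h)
  rwa [Nat.mod_eq_of_lt (lt_of_le_of_lt hs hk), Nat.mod_eq_of_lt (lt_of_le_of_lt ht hk)] at this

theorem cycleRun_union (a : ZMod n) (k l : ℕ) :
    cycleRun n a k ∪ cycleRun n (a + (k + 1 : ℕ)) l = cycleRun n a (k + 1 + l) := by
  ext x
  simp only [cycleRun, Set.mem_union, Set.mem_image, Set.mem_Iic]
  constructor
  · rintro (⟨t, ht, rfl⟩ | ⟨t, ht, rfl⟩)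
    · exact ⟨t, by omega, rfl⟩
    · exact ⟨k + 1 + t, by omega, by push_cast; ring⟩
  · rintro ⟨t, ht, rfl⟩
    rcases le_or_gt t k with htk | htk
    · exact Or.inl ⟨t, htk, rfl⟩
    · refine Or.inr ⟨t - (k + 1), by omega, ?_⟩
      rw [add_assoc, ← Nat.cast_add, Nat.add_sub_cancel' htk]

theorem natInterval_eq_cycleRun {i j : ℕ} (hij : i ≤ j) :
    natInterval n i j = cycleRun n i (j - i) := by
  ext x
  simp only [natInterval, cycleRun, Set.mem_image, Set.mem_Icc, Set.mem_Iic]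
  constructor
  · rintro ⟨m, hm, rfl⟩
    exact ⟨m - i, by omega, by rw [← Nat.cast_add, Nat.add_sub_cancel' hm.1]⟩
  · rintro ⟨t, ht, rfl⟩
    exact ⟨i + t, by omega, by push_cast; rfl⟩

theorem IsArc.exists_eq_cycleRun {I : Set (ZMod n)} (hI : IsArc n I) :
    ∃ a k, k < n ∧ I = cycleRun n a k := by
  rcases hI with ⟨i, j, hi, hij, hjn, rfl⟩ | ⟨i, j, hi, hij, hjn, rfl⟩
  · exact ⟨i, j - i, by omega, natInterval_eq_cycleRun hij⟩
  · refine ⟨j, n - j + 1 + (i - 1), by omega, ?_⟩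
    have hwrap : ((1 : ℕ) : ZMod n) = j + (n - j + 1 : ℕ) := by
      rw [← Nat.cast_add, show j + (n - j + 1) = n + 1 by omega, Nat.cast_add,
        ZMod.natCast_self, zero_add]
    rw [natInterval_eq_cycleRun (by omega), natInterval_eq_cycleRun hi, hwrap, cycleRun_union]

theorem IsWeakEndCycle.exists_mem_dihedralCycle_eqOn_cycleRun {α : ZMod n → ZMod n}
    (hα : IsWeakEndCycle n α) {a : ZMod n} {k : ℕ} (hk : k < n)
    (hinj : Set.InjOn α (cycleRun n a k)) :
    ∃ σ ∈ dihedralCycle n, Set.EqOn α σ (cycleRun n a k) := by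
  have hf (t : ℕ) : α (a + (t + 1 : ℕ)) - α (a + t) ∈ ({0, 1, -1} : Set (ZMod n)) := by
    simpa only [Nat.cast_succ, add_assoc] using hα (a + t)
  obtain ⟨ε, hε, hform⟩ := exists_eq_add_mul_of_injOn_Iic (f := fun t : ℕ => α (a + t)) hf
    (hinj.comp (injOn_add_natCast a hk) (Set.mapsTo_image _ _))
  simp only [Nat.cast_zero, add_zero] at hform
  rcases hε with rfl | rfl
  · refine ⟨Equiv.addRight (α a - a), addRight_mem_dihedralCycle _, ?_⟩
    rintro - ⟨t, ht, rfl⟩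
    simp [hform t ht]; ring
  · refine ⟨Equiv.subLeft (α a + a), subLeft_mem_dihedralCycle _, ?_⟩
    rintro - ⟨t, ht, rfl⟩
    simp [hform t ht]; ring

end Arc

theorem injOn_arc_eq_dihedral_on_arc_general (n : ℕ) (I : Set (ZMod n))
    (hI : IsArc n I) (α : ZMod n → ZMod n) (hα : IsWeakEndCycle n α)
    (hinj : Set.InjOn α I) :
    ∃ σ ∈ dihedralCycle n, Set.EqOn α (⇑σ) I := by
  obtain ⟨a, k, hk, rfl⟩ := hI.exists_eq_cycleRun
  exact hα.exists_mem_dihedralCycle_eqOn_cycleRun hk hinj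

/-- If a weak endomorphism `α` of `C_n` is injective on an arc `I`, then `α` agrees on
`I` with some element `σ` of the dihedral group `D_{2n}`. -/
theorem injOn_arc_eq_dihedral_on_arc (n : ℕ) (hn : 3 ≤ n) (I : Set (ZMod n))
    (hI : IsArc n I) (α : ZMod n → ZMod n) (hα : IsWeakEndCycle n α)
    (hinj : Set.InjOn α I) :
    ∃ σ ∈ dihedralCycle n, Set.EqOn α (⇑σ) I :=
  injOn_arc_eq_dihedral_on_arc_general n I hI α hα hinj
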